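/- arXiv:1506.05737 — 3 statements merged into one kernel-verified Lean document; each statement's English description precedes it below -/
import Mathlib

section
/- Let G be a group of order p(p+1) with p prime, and suppose G has a Sylow p-subgroup P whose normalizer is P itself. Then the set K = (G \ ⋃_{g∈G} P^g) ∪ {1} has exactly p+1 elements. -/
/-!
Since `|G| = p (p + 1)`, every Sylow `p`-subgroup has prime order `p`, so distinct ones meet
trivially, and there are `[G : N_G(P)] = [G : P] = p + 1` of them. Their nonidentity elements
therefore number `(p + 1)(p - 1)`, and the remaining `p(p + 1) - (p + 1)(p - 1) = p + 1` elements
of `G` are exactly those of `K`.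
-/

open Subgroup Pointwise

namespace Subgroup

variable {G : Type*} [Group G]

theorem inf_eq_bot_of_card_eq_prime {p : ℕ} (hp : p.Prime) {H K : Subgroup G}
    (hH : Nat.card H = p) (hK : Nat.card K = p) (hne : H ≠ K) : H ⊓ K = ⊥ := by
  have : Finite H := Nat.finite_of_card_ne_zero (hH ▸ hp.ne_zero)
  have : Finite K := Nat.finite_of_card_ne_zero (hK ▸ hp.ne_zero)
  rcases (Nat.dvd_prime hp).mp (hH ▸ card_dvd_of_le inf_le_left : Nat.card ↥(H ⊓ K) ∣ p) with
    h | h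
  · exact card_eq_one.mp h
  · have hH' : H ⊓ K = H := eq_of_le_of_card_ge inf_le_left (by rw [h, hH])
    have hK' : H ⊓ K = K := eq_of_le_of_card_ge inf_le_right (by rw [h, hK])
    exact absurd (hH'.symm.trans hK') hne

theorem ncard_iUnion_diff_one {ι : Type*} [Fintype ι] [Finite G] (H : ι → Subgroup G)
    (hH : Pairwise fun i j => H i ⊓ H j = ⊥) :
    (⋃ i, (H i : Set G) \ {1}).ncard = ∑ i, (Nat.card (H i) - 1) := by
  have hdisj : Pairwise fun i j => Disjoint ((H i : Set G) \ {1}) ((H j : Set G) \ {1}) := by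
    intro i j hij
    refine Set.disjoint_left.mpr fun x hxi hxj => hxi.2 ?_
    have hx : x ∈ H i ⊓ H j := ⟨hxi.1, hxj.1⟩
    rwa [hH hij, mem_bot] at hx
  rw [Set.ncard_iUnion_of_finite (fun _ => Set.toFinite _) hdisj, finsum_eq_sum_of_fintype]
  refine Finset.sum_congr rfl fun i _ => ?_
  rw [Set.ncard_sdiff_singleton_of_mem (one_mem (H i))]
  rfl

end Subgroup

namespace Sylow

variable {p : ℕ} [hp : Fact p.Prime] {G : Type*} [Group G]

theorem card_eq_pow_of_card_eq_mul [Finite G] (P : Sylow p G) {n m : ℕ}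
    (hG : Nat.card G = p ^ n * m) (hm : ¬p ∣ m) : Nat.card P = p ^ n := by
  have hm0 : m ≠ 0 := fun h => hm (h ▸ dvd_zero p)
  rw [P.card_eq_multiplicity, hG, Nat.factorization_mul (pow_ne_zero n hp.out.ne_zero) hm0,
    Finsupp.add_apply, hp.out.factorization_pow, Finsupp.single_eq_same,
    Nat.factorization_eq_zero_of_not_dvd hm, add_zero]

theorem exists_mem_iff_exists_conj_mem [Finite (Sylow p G)] (P : Sylow p G) {x : G} :
    (∃ Q : Sylow p G, x ∈ (Q : Subgroup G)) ↔ ∃ g : G, ∃ h ∈ (P : Subgroup G), x = g⁻¹ * h * g := by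
  constructor
  · rintro ⟨Q, hxQ⟩
    obtain ⟨g, rfl⟩ := MulAction.exists_smul_eq G P Q
    obtain ⟨h, hhP, rfl⟩ := (mem_smul_pointwise_iff_exists _ _ _).mp hxQ
    exact ⟨g⁻¹, h, hhP, by simp [MulAut.conj_apply]⟩
  · rintro ⟨g, h, hhP, rfl⟩
    exact ⟨g⁻¹ • P, (mem_smul_pointwise_iff_exists _ _ _).mpr ⟨h, hhP, by simp⟩⟩

end Sylow

theorem frobenius_kernel_card (p : ℕ) [Fact p.Prime] (G : Type*) [Group G] [Fintype G]
    (hG : Fintype.card G = p * (p + 1)) (P : Sylow p G)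
    (hnorm : Subgroup.normalizer ((P : Subgroup G) : Set G) = P) :
    Set.ncard {x : G | x = 1 ∨ ∀ g : G, ∀ h ∈ (P : Subgroup G), x ≠ g⁻¹ * h * g}
      = p + 1 := by
  have hp : p.Prime := Fact.out
  have hcard : Nat.card G = p ^ 1 * (p + 1) := by rw [Nat.card_eq_fintype_card, hG, pow_one]
  have hsylow (Q : Sylow p G) : Nat.card Q = p := by
    simpa using Q.card_eq_pow_of_card_eq_mul hcard (by simpa using hp.not_dvd_one)
  have hnum : Fintype.card (Sylow p G) = p + 1 := by
    have hindex := (P : Subgroup G).card_mul_index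
    rw [hsylow, hcard, pow_one] at hindex
    rw [← Nat.card_eq_fintype_card, P.card_eq_index_normalizer,
      show normalizer (P : Set G) = P from hnorm]
    exact Nat.eq_of_mul_eq_mul_left hp.pos hindex
  have hK : {x : G | x = 1 ∨ ∀ g : G, ∀ h ∈ (P : Subgroup G), x ≠ g⁻¹ * h * g} =
      (⋃ Q : Sylow p G, ((Q : Subgroup G) : Set G) \ {1})ᶜ := by
    ext x
    have := P.exists_mem_iff_exists_conj_mem (x := x)
    simp only [Set.mem_ofPred_eq, Set.mem_compl_iff, Set.mem_iUnion, Set.mem_sdiff,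
      Set.mem_singleton_iff, SetLike.mem_coe] at this ⊢
    grind
  have hdisj : Pairwise fun Q R : Sylow p G => (Q : Subgroup G) ⊓ R = ⊥ :=
    fun Q R hQR => inf_eq_bot_of_card_eq_prime hp (hsylow Q) (hsylow R) (Sylow.ext.mt hQR)
  rw [hK]
  refine Set.ncard_compl_of_ncard_eq_add _ ?_
  rw [ncard_iUnion_diff_one _ hdisj]
  simp only [hsylow, Finset.sum_const, Finset.card_univ, hnum, smul_eq_mul, hcard, pow_one]
  obtain ⟨k, rfl⟩ := Nat.exists_eq_add_of_le' hp.one_le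
  simp only [Nat.add_sub_cancel]
  ring
end

section
/- Let G be a finite group that is a semidirect product K ⋊ P where K is elementary abelian of order 2^n and P is cyclic of order 2^n − 1 acting on K with no nontrivial fixed points. Then G is isomorphic to the affine group AGL(1, 2^n) = 𝔽_{2^n} ⋊ 𝔽_{2^n}^×. -/
/-- The map turning additive automorphisms into multiplicative automorphisms of
`Multiplicative A`. -/
def addAutToMulAut (A : Type*) [AddGroup A] :
    Multiplicative (AddAut A) →* MulAut (Multiplicative A) where
  toFun e := AddEquiv.toMultiplicative e.toAdd
  map_one' := rfl
  map_mul' := fun _ _ => rfl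

/-- The natural action of `𝔽_{2^n}ˣ` on the additive group of `𝔽_{2^n}` by multiplication,
used to form `AGL(1, 2^n) = 𝔽_{2^n} ⋊ 𝔽_{2^n}ˣ`. -/
noncomputable def aglAction (n : ℕ) :
    (GaloisField 2 n)ˣ →* MulAut (Multiplicative (GaloisField 2 n)) :=
  (addAutToMulAut _).comp (DistribMulAction.toAddAut _ _)

/-!
Fix `k₀ ≠ 1` in `K`. Since no `φ p` with `p ≠ 1` fixes `k₀`, the map `0 ↦ 1`, `p ↦ φ p k₀` from
`WithZero P` to `K` is injective, hence bijective because `|P| + 1 = 2 ^ n = |K|`. Transporting the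
multiplication of `WithZero P` along it while keeping the group law of `K` as addition makes `K` a
field: multiplication by the image of `p` is `φ p`, which is additive, and it is commutative
because `P` is cyclic. A field with `2 ^ n` elements is `𝔽_{2^n}`, and under this identification
`P` is its unit group acting on `K` by multiplication, which is exactly `AGL(1, 2^n)`.
-/

open Function

section

variable {P K : Type*} [Group P] [CommGroup K]

theorem MulAut.injective_apply_of_fixedPointFree {φ : P →* MulAut K}
    (hfix : ∀ p : P, p ≠ 1 → ∀ k : K, φ p k = k → k = 1) {k₀ : K} (hk₀ : k₀ ≠ 1) :
    Injective fun p => φ p k₀ := by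
  intro p q hpq
  by_contra hne
  refine hk₀ (hfix (q⁻¹ * p) (fun h => hne (inv_mul_eq_one.mp h).symm) k₀ ?_)
  simp only at hpq
  rw [map_mul, MulAut.mul_apply, hpq, ← MulAut.mul_apply, ← map_mul, inv_mul_cancel, map_one,
    MulAut.one_apply]

/-- `0` acts as the constant endomorphism `1` (not the identity), which keeps the extension
multiplicative with respect to composition. -/
def MulAut.withZeroExtend (φ : P →* MulAut K) : WithZero P → K →* K :=
  WithZero.recZeroCoe 1 fun p => (φ p : K ≃* K).toMonoidHom

theorem MulAut.withZeroExtend_mul_apply (φ : P →* MulAut K) (u v : WithZero P) (k : K) :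
    withZeroExtend φ (u * v) k = withZeroExtend φ u (withZeroExtend φ v k) := by
  cases u <;> cases v <;> simp [withZeroExtend, ← WithZero.coe_mul]

section OrbitField

variable (φ : P →* MulAut K) (k₀ : K)

def orbitMap (u : WithZero P) : Additive K :=
  Additive.ofMul (MulAut.withZeroExtend φ u k₀)

theorem orbitMap_mul (u v : WithZero P) :
    orbitMap φ k₀ (u * v) =
      Additive.ofMul (MulAut.withZeroExtend φ u (orbitMap φ k₀ v).toMul) :=
  congrArg Additive.ofMul (MulAut.withZeroExtend_mul_apply φ u v k₀)

variable {φ k₀}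

theorem injective_orbitMap (hfix : ∀ p : P, p ≠ 1 → ∀ k : K, φ p k = k → k = 1)
    (hk₀ : k₀ ≠ 1) : Injective (orbitMap φ k₀) := by
  have hne (p : P) : φ p k₀ ≠ 1 := fun h => hk₀ <| (φ p).injective (h.trans (map_one _).symm)
  rintro (_ | p) (_ | q) h
  · rfl
  · exact absurd h.symm (hne q)
  · exact absurd h (hne p)
  · exact congrArg _ (MulAut.injective_apply_of_fixedPointFree hfix hk₀ h)

theorem bijective_orbitMap [Finite P] [Finite K]
    (hfix : ∀ p : P, p ≠ 1 → ∀ k : K, φ p k = k → k = 1) (hk₀ : k₀ ≠ 1)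
    (hcard : Nat.card K = Nat.card P + 1) : Bijective (orbitMap φ k₀) :=
  (injective_orbitMap hfix hk₀).bijective_of_nat_card_le <| by
    rw [Nat.card_congr Additive.toMul, hcard]
    exact (Finite.card_option (α := P)).ge

variable [IsMulCommutative P] (hbij : Bijective (orbitMap φ k₀))

noncomputable abbrev fieldOfBijectiveOrbitMap : Field (Additive K) :=
  let e := (Equiv.ofBijective _ hbij).symm
  letI := e.mul
  letI := e.one
  letI : Inv (Additive K) := ⟨fun x => e.symm (e x)⁻¹⟩
  have mul_def (x y : Additive K) : x * y = e.symm (e x * e y) := rfl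
  have one_def : e 1 = 1 := e.apply_symm_apply 1
  have symm_zero : e.symm 0 = 0 := rfl
  have e_zero : e 0 = 0 := e.eq_symm_apply.mp symm_zero.symm
  have mul_eq_apply (x y : Additive K) :
      x * y = Additive.ofMul (MulAut.withZeroExtend φ (e x) y.toMul) := by
    rw [mul_def, show e.symm = orbitMap φ k₀ from rfl, orbitMap_mul]
    exact congrArg _ (congrArg _ (e.symm_apply_apply y))
  have mul_comm (u v : WithZero P) : u * v = v * u := by
    cases u <;> cases v <;> simp [← WithZero.coe_mul, mul_comm']
  { (inferInstance : AddCommGroup (Additive K)) with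
    mul := (· * ·)
    one := 1
    inv := Inv.inv
    mul_assoc x y z := by simp only [mul_def, e.apply_symm_apply, mul_assoc]
    one_mul x := by simp only [mul_def, one_def, one_mul, e.symm_apply_apply]
    mul_one x := by simp only [mul_def, one_def, mul_one, e.symm_apply_apply]
    zero_mul x := by simp only [mul_def, e_zero, zero_mul, symm_zero]
    mul_zero x := by simp only [mul_def, e_zero, mul_zero, symm_zero]
    mul_comm x y := by simp only [mul_def, mul_comm (e x)]
    left_distrib x y z := by
      simp only [mul_eq_apply]
      exact congrArg Additive.ofMul (map_mul _ y.toMul z.toMul)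
    right_distrib x y z := by
      simp only [mul_def, mul_comm _ (e z)]
      simp only [← mul_def, mul_eq_apply]
      exact congrArg Additive.ofMul (map_mul _ x.toMul y.toMul)
    exists_pair_ne :=
      ⟨0, 1, fun h => zero_ne_one (e_zero.symm.trans ((congrArg e h).trans one_def))⟩
    mul_inv_cancel x hx := by
      show e.symm (e x * e (e.symm (e x)⁻¹)) = e.symm 1
      rw [e.apply_symm_apply, mul_inv_cancel₀ (fun h => hx (e.injective (h.trans e_zero.symm)))]
    inv_zero := by
      show e.symm (e 0)⁻¹ = 0
      rw [e_zero, inv_zero, symm_zero]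
    nnqsmul := _
    qsmul := _ }

noncomputable def orbitMulEquiv :
    letI := fieldOfBijectiveOrbitMap hbij
    WithZero P ≃* Additive K :=
  letI := fieldOfBijectiveOrbitMap hbij
  (Equiv.ofBijective _ hbij).symm.mulEquiv.symm

theorem orbitMulEquiv_apply (u : WithZero P) : orbitMulEquiv hbij u = orbitMap φ k₀ u := rfl

theorem orbitMulEquiv_mul (u : WithZero P) (y : Additive K) :
    letI := fieldOfBijectiveOrbitMap hbij
    orbitMulEquiv hbij u * y = Additive.ofMul (MulAut.withZeroExtend φ u y.toMul) := by
  let _ := fieldOfBijectiveOrbitMap hbij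
  obtain ⟨v, rfl⟩ := (orbitMulEquiv hbij).surjective y
  rw [← map_mul, orbitMulEquiv_apply, orbitMulEquiv_apply, orbitMap_mul]

noncomputable def orbitUnitsEquiv :
    letI := fieldOfBijectiveOrbitMap hbij
    P ≃* (Additive K)ˣ :=
  letI := fieldOfBijectiveOrbitMap hbij
  WithZero.unitsWithZeroEquiv.symm.trans (Units.mapEquiv (orbitMulEquiv hbij))

theorem orbitUnitsEquiv_mul (p : P) (k : K) :
    letI := fieldOfBijectiveOrbitMap hbij
    (orbitUnitsEquiv hbij p : Additive K) * Additive.ofMul k = Additive.ofMul (φ p k) :=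
  orbitMulEquiv_mul hbij p (Additive.ofMul k)

end OrbitField

def mulEquivAffineGroup {φ : P →* MulAut K} {F : Type*} [Field F] (ψ : Additive K ≃+ F)
    (θ : P ≃* Fˣ) (h : ∀ p k, (θ p : F) * ψ (Additive.ofMul k) = ψ (Additive.ofMul (φ p k))) :
    K ⋊[φ] P ≃*
      Multiplicative F ⋊[(addAutToMulAut F).comp (DistribMulAction.toAddAut Fˣ F)] Fˣ :=
  SemidirectProduct.congr (AddEquiv.toMultiplicativeRight ψ) θ fun p => by
    ext k
    exact congrArg Multiplicative.ofAdd (h p k).symm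

end

theorem iso_AGL_one_general (n : ℕ)
    (K : Type*) [CommGroup K] [Fintype K] (hK : Fintype.card K = 2 ^ n)
    (P : Type*) [Group P] [Fintype P] (hPcyc : IsCyclic P)
    (hP : Fintype.card P = 2 ^ n - 1)
    (φ : P →* MulAut K)
    (hfix : ∀ p : P, p ≠ 1 → ∀ k : K, φ p k = k → k = 1) :
    Nonempty ((K ⋊[φ] P) ≃*
      (Multiplicative (GaloisField 2 n) ⋊[aglAction n] (GaloisField 2 n)ˣ)) := by
  have hcard : Nat.card K = Nat.card P + 1 := by
    rw [Nat.card_eq_fintype_card, Nat.card_eq_fintype_card, hK, hP,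
      Nat.sub_add_cancel Nat.one_le_two_pow]
  have : Nontrivial K := Finite.one_lt_card_iff_nontrivial.mp <| by
    rw [hcard]
    exact Nat.lt_add_of_pos_left Nat.card_pos
  obtain ⟨k₀, hk₀⟩ := exists_ne (1 : K)
  have hbij := bijective_orbitMap hfix hk₀ hcard
  let _ := fieldOfBijectiveOrbitMap hbij
  have hKF : Fintype.card (Additive K) = 2 ^ n := (Fintype.card_congr Additive.toMul).trans hK
  have : CharP (Additive K) 2 := charP_of_card_eq_prime_pow hKF
  let _ := ZMod.algebra (Additive K) 2
  let R := (GaloisField.algEquivGaloisField 2 n (Nat.card_eq_fintype_card.trans hKF)).toRingEquiv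
  exact ⟨mulEquivAffineGroup R.toAddEquiv
    ((orbitUnitsEquiv hbij).trans (Units.mapEquiv R.toMulEquiv))
    fun p k => (map_mul R _ _).symm.trans (congrArg R (orbitUnitsEquiv_mul hbij p k))⟩

theorem iso_AGL_one (n : ℕ) (hn : 0 < n)
    (K : Type*) [CommGroup K] [Fintype K] (hK : Fintype.card K = 2 ^ n)
    (hK2 : ∀ x : K, x ^ 2 = 1)
    (P : Type*) [Group P] [Fintype P] (hPcyc : IsCyclic P)
    (hP : Fintype.card P = 2 ^ n - 1)
    (φ : P →* MulAut K)
    (hfix : ∀ p : P, p ≠ 1 → ∀ k : K, φ p k = k → k = 1) :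
    Nonempty ((K ⋊[φ] P) ≃*
      (Multiplicative (GaloisField 2 n) ⋊[aglAction n] (GaloisField 2 n)ˣ)) :=
  iso_AGL_one_general n K hK P hPcyc hP φ hfix
end

section
/- Any cyclic subgroup of GL(n, 𝔽₂) of order 2^n − 1 acts transitively on the nonzero vectors of 𝔽₂^n. -/
/-!
Let `g` generate `S`. The algebra `A = K[g]` of matrices has dimension at most `n` by
Cayley–Hamilton, so `|A| ≤ q ^ n`; on the other hand it contains `0` and the `q ^ n - 1`
elements of `S`. Hence `A = {0} ∪ S`, so every nonzero element of `A` is invertible. For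
`v ≠ 0` the map `a ↦ a v` is then injective on `A`, hence a bijection `A → K ^ n`, and a
nonzero `w` is hit by a nonzero `a`, i.e. by an element of `S`.
-/

open Polynomial Matrix

theorem Matrix.natCard_adjoin_le {ι R : Type*} [Fintype ι] [DecidableEq ι] [CommRing R]
    [Nontrivial R] [Finite R] (M : Matrix ι ι R) :
    Nat.card (Algebra.adjoin R {M}) ≤ Nat.card R ^ Fintype.card ι := by
  let f : degreeLT R (Fintype.card ι) → Algebra.adjoin R {M} :=
    fun p ↦ ⟨aeval M p.1, aeval_mem_adjoin_singleton R M⟩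
  have hf : Function.Surjective f := by
    rintro ⟨_, hx⟩
    rw [Algebra.adjoin_singleton_eq_range_aeval] at hx
    obtain ⟨p, rfl⟩ := hx
    refine ⟨⟨p %ₘ M.charpoly, mem_degreeLT.2 ?_⟩,
      Subtype.ext (M.aeval_eq_aeval_mod_charpoly p).symm⟩
    simpa [M.charpoly_degree_eq_dim] using degree_modByMonic_lt p M.charpoly_monic
  have : Finite (degreeLT R (Fintype.card ι)) := .of_equiv _ (degreeLTEquiv R _).toEquiv.symm
  calc Nat.card (Algebra.adjoin R {M}) ≤ Nat.card (degreeLT R (Fintype.card ι)) :=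
        Nat.card_le_card_of_surjective f hf
    _ = Nat.card R ^ Fintype.card ι := by
        rw [Nat.card_congr (degreeLTEquiv R _).toEquiv, Nat.card_fun, Nat.card_fin]

theorem IsCyclic.exists_image_val_subset_adjoin {K R : Type*} [CommSemiring K] [Ring R]
    [Algebra K R] (S : Subgroup Rˣ) [Finite S] [IsCyclic S] :
    ∃ x : R, Units.val '' (S : Set Rˣ) ⊆ Algebra.adjoin K {x} := by
  obtain ⟨g, hg⟩ := IsCyclic.exists_monoid_generator (α := S)
  refine ⟨((g : Rˣ) : R), ?_⟩
  rintro _ ⟨s, hs, rfl⟩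
  obtain ⟨k, hk⟩ := (Submonoid.mem_powers_iff _ _).1 (hg ⟨s, hs⟩)
  rw [← congrArg (fun t : S ↦ ((t : Rˣ) : R)) hk]
  simpa using Subalgebra.pow_mem _ (Algebra.self_mem_adjoin_singleton K _) k

theorem Units.ncard_insert_zero_image_val {R : Type*} [MonoidWithZero R] [Nontrivial R]
    (S : Set Rˣ) [Finite S] : (insert 0 (Units.val '' S)).ncard = Nat.card S + 1 := by
  rw [Set.ncard_insert_of_notMem (fun ⟨u, _, hu⟩ ↦ u.ne_zero hu : (0 : R) ∉ Units.val '' S)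
      (S.toFinite.image _),
    Set.ncard_image_of_injective _ Units.val_injective, Nat.card_coe_set_eq]

theorem Matrix.exists_mem_mulVec_eq_of_forall_isUnit {ι K : Type*} [Fintype ι] [DecidableEq ι]
    [Ring K] [Finite K] {A : AddSubgroup (Matrix ι ι K)}
    (hunit : ∀ a ∈ A, a ≠ 0 → IsUnit a)
    (hcard : Nat.card (ι → K) ≤ Nat.card A) {v : ι → K} (hv : v ≠ 0) (w : ι → K) :
    ∃ a ∈ A, a *ᵥ v = w := by
  have hinj : Function.Injective (fun a : A ↦ (a : Matrix ι ι K) *ᵥ v) := by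
    intro a b hab
    by_contra hne
    have hsub : (a - b : Matrix ι ι K) ≠ 0 := sub_ne_zero.2 (Subtype.coe_injective.ne hne)
    have hker : (a - b : Matrix ι ι K) *ᵥ v = 0 := by
      simpa [Matrix.sub_mulVec, sub_eq_zero] using hab
    exact hv <| mulVec_injective_of_isUnit (hunit _ (A.sub_mem a.2 b.2) hsub)
      (hker.trans (mulVec_zero _).symm)
  obtain ⟨a, rfl⟩ := (hinj.bijective_of_nat_card_le hcard).2 w
  exact ⟨a, a.2, rfl⟩

theorem Matrix.GeneralLinearGroup.exists_mem_mulVec_eq_of_isCyclic {ι K : Type*} [Fintype ι]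
    [DecidableEq ι] [CommRing K] [Nontrivial K] [Finite K] (S : Subgroup (GL ι K)) [IsCyclic S]
    (hcard : Nat.card S = Nat.card K ^ Fintype.card ι - 1) {v w : ι → K} (hv : v ≠ 0)
    (hw : w ≠ 0) : ∃ g ∈ S, (g : Matrix ι ι K) *ᵥ v = w := by
  have : Nonempty ι := by
    by_contra h
    exact hv (funext fun i ↦ (h ⟨i⟩).elim)
  obtain ⟨x, hSx⟩ := IsCyclic.exists_image_val_subset_adjoin (K := K) S
  set A := Algebra.adjoin K {x}
  set T := Units.val '' (S : Set (GL ι K))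
  have hT : (insert 0 T).ncard = Nat.card (ι → K) := by
    have : 0 < Nat.card K ^ Fintype.card ι := pow_pos Nat.card_pos _
    rw [Units.ncard_insert_zero_image_val, SetLike.coe_sort_coe, hcard, Nat.card_fun,
      Nat.card_eq_fintype_card (α := ι)]
    exact Nat.sub_add_cancel this
  have hA : insert 0 T = A := by
    refine Set.eq_of_subset_of_ncard_le (Set.insert_subset A.zero_mem hSx) ?_
    rw [hT, ← Nat.card_coe_set_eq, Nat.card_fun, Nat.card_eq_fintype_card (α := ι)]
    exact x.natCard_adjoin_le
  have hunit : ∀ a ∈ A, a ≠ 0 → a ∈ T :=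
    fun a ha ha0 ↦ (show a ∈ insert 0 T from hA ▸ ha).resolve_left ha0
  have hcardA : Nat.card (ι → K) = Nat.card A := by
    rw [← hT, hA]
    exact Nat.card_coe_set_eq (A : Set (Matrix ι ι K))
  obtain ⟨a, haA, rfl⟩ :=
    Matrix.exists_mem_mulVec_eq_of_forall_isUnit (A := A.toSubring.toAddSubgroup)
      (fun a ha ha0 ↦ by obtain ⟨u, -, rfl⟩ := hunit a ha ha0; exact u.isUnit) hcardA.le hv w
  have ha0 : a ≠ 0 := by rintro rfl; exact hw (zero_mulVec v)
  obtain ⟨g, hg, rfl⟩ := hunit a haA ha0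
  exact ⟨g, hg, rfl⟩

theorem singer_cycle_transitive (n : ℕ)
    (S : Subgroup (Matrix.GeneralLinearGroup (Fin n) (ZMod 2)))
    (hcyc : IsCyclic S) (hcard : Nat.card S = 2 ^ n - 1) :
    ∀ v w : Fin n → ZMod 2, v ≠ 0 → w ≠ 0 →
      ∃ g ∈ S, (g : Matrix (Fin n) (Fin n) (ZMod 2)).mulVec v = w := by
  intro v w hv hw
  exact Matrix.GeneralLinearGroup.exists_mem_mulVec_eq_of_isCyclic S (by simpa using hcard) hv hw
end
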